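/- For integers K ≥ 1 and 0 ≤ t < K, the coded multicast rate b(M) := Σ_{i=1}^{M} C(K−i,t)/C(K,t) for 1 ≤ M ≤ K−t is strictly increasing in M and satisfies b(M) ≤ (K−t)/(1+t) for all such M. -/
import Mathlib

theorem stmt_3 (K t : ℕ) (hK : 1 ≤ K) (ht : t < K)
    (b : ℕ → ℚ)
    (hb : ∀ M, b M = (∑ i ∈ Finset.Icc 1 M, ((K - i).choose t : ℚ)) / (K.choose t : ℚ)) :
    (∀ M, 1 ≤ M → M + 1 ≤ K - t → b M < b (M + 1)) ∧
    (∀ M, 1 ≤ M → M ≤ K - t → b M ≤ ((K : ℚ) - t) / (1 + t)) := by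
  have hden : (0 : ℚ) < (K.choose t : ℚ) := by
    exact_mod_cast Nat.choose_pos ht.le
  constructor
  · intro M hM hMK
    rw [hb, hb]
    apply div_lt_div_of_pos_right ?_ hden
    rw [Finset.sum_Icc_succ_top (by omega : 1 ≤ M + 1)]
    have hpos : (0 : ℚ) < ((K - (M + 1)).choose t : ℚ) := by
      exact_mod_cast Nat.choose_pos (by omega : t ≤ K - (M + 1))
    linarith
  · intro M hM hMK
    -- first bound by b (K - t)
    have key : ∑ i ∈ Finset.Icc 1 (K - t), ((K - i).choose t) = K.choose (t + 1) := by
      have := Nat.sum_Icc_choose (K - 1) t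
      rw [Nat.sub_add_cancel hK] at this
      rw [← this]
      apply Finset.sum_nbij' (fun i => K - i) (fun j => K - j)
      · intro a ha; simp only [Finset.mem_Icc] at *; omega
      · intro a ha; simp only [Finset.mem_Icc] at *; omega
      · intro a ha; simp only [Finset.mem_Icc] at *; omega
      · intro a ha; simp only [Finset.mem_Icc] at *; omega
      · intro a _; rfl
    have hmono : (∑ i ∈ Finset.Icc 1 M, ((K - i).choose t : ℚ)) ≤
        ∑ i ∈ Finset.Icc 1 (K - t), ((K - i).choose t : ℚ) := by
      apply Finset.sum_le_sum_of_subset_of_nonneg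
      · apply Finset.Icc_subset_Icc_right hMK
      · intro i _ _; positivity
    rw [hb]
    calc (∑ i ∈ Finset.Icc 1 M, ((K - i).choose t : ℚ)) / (K.choose t : ℚ)
        ≤ (∑ i ∈ Finset.Icc 1 (K - t), ((K - i).choose t : ℚ)) / (K.choose t : ℚ) := by
          gcongr
      _ = ((K : ℚ) - t) / (1 + t) := by
          rw [← Nat.cast_sum, key]
          have h2 : ((K - t : ℕ) : ℚ) = (K : ℚ) - t := by
            push_cast [Nat.cast_sub ht.le]; ring
          have h1 : (K.choose (t + 1) : ℚ) * (1 + t) = (K.choose t : ℚ) * ((K : ℚ) - t) := by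
            have h3 := congrArg (fun n : ℕ => (n : ℚ)) (Nat.choose_succ_right_eq K t)
            push_cast [Nat.cast_sub ht.le] at h3
            linarith
          have ht1 : (0 : ℚ) < 1 + t := by positivity
          field_simp
          linarith
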